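/- Let ω be a continuous antisymmetric bilinear form on h^0 of the form ω(ξ,η) = ⟨J ξ, η⟩ with J = i + Υ, where Υ is a bounded antisymmetric operator with ‖Υ‖ < 1. Suppose ω(ξ,η) = 0 for all ξ, η in a real subspace L satisfying L ⊂ L^⊥ω and iL = L^⊥ (orthogonal complement in the real inner product), where L^⊥ω = {ξ : ω(ξ,η)=0 ∀η ∈ L}. Then L^⊥ω = L, i.e., L is Lagrangian for ω. -/

import Mathlib

noncomputable section

/-- The space `h⁰`: the `l²` space of complex sequences, viewed as a real Hilbert space with
`⟨u, w⟩ = Re Σ u_j conj w_j`. -/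
abbrev H0 := lp (fun _ : ℕ => ℂ) 2

/-- The real scalar product on `h⁰`. -/
def rIn (u w : H0) : ℝ := (inner (𝕜 := ℂ) u w : ℂ).re

/-!
Decompose `ξ ∈ L^⊥ω` as `ξ = a + b` with `a ∈ L` and `b ∈ L^⊥ = iL`. Since `ω` vanishes on `L`,
also `ω(b, η) = 0` for `η ∈ L`, in particular for `η = ib ∈ i(iL) = L`. But
`ω(b, ib) = ‖ib‖² + ⟨Υb, ib⟩ ≥ (1 - ‖Υ‖)‖b‖²`, so `b = 0`. The decomposition needs `L` closed,
which holds because `L` is the preimage of the closed subspace `L^⊥` under multiplication by `i`.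
-/

open RealInnerProductSpace

section RealHilbert

variable {E : Type*} [NormedAddCommGroup E] [InnerProductSpace ℝ E]

theorem Submodule.isClosed_of_orthogonal_eq_image (L : Submodule ℝ E) (J : E →L[ℝ] E)
    (hJ : Function.Injective J) (hperp : (Lᗮ : Set E) = J '' L) : IsClosed (L : Set E) := by
  have hL : (L : Set E) = J ⁻¹' Lᗮ := by
    rw [hperp, hJ.preimage_image]
  rw [hL]
  exact (Submodule.isClosed_orthogonal L).preimage J.continuous

theorem sub_opNorm_mul_sq_le_inner_add_apply (J T : E →L[ℝ] E) (hJ : ∀ x, ‖J x‖ = ‖x‖)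
    (x : E) : (1 - ‖T‖) * ‖x‖ ^ 2 ≤ ⟪J x + T x, J x⟫ := by
  have hTx : -(‖T‖ * ‖x‖ ^ 2) ≤ ⟪T x, J x⟫ :=
    calc -(‖T‖ * ‖x‖ ^ 2) ≤ -(‖T x‖ * ‖J x‖) := by
          rw [hJ, sq, ← mul_assoc]
          gcongr
          exact T.le_opNorm x
      _ ≤ ⟪T x, J x⟫ := neg_le_of_abs_le (abs_real_inner_le_norm _ _)
  rw [inner_add_left, real_inner_self_eq_norm_sq, hJ]
  linarith

def Submodule.omegaOrthogonal (J T : E →L[ℝ] E) (L : Submodule ℝ E) : Set E :=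
  {ξ | ∀ η ∈ L, ⟪J ξ + T ξ, η⟫ = 0}

theorem Submodule.omegaOrthogonal_eq_self [CompleteSpace E] (J T : E →L[ℝ] E)
    (hJJ : ∀ x, J (J x) = -x) (hJ : ∀ x, ‖J x‖ = ‖x‖) (hT : ‖T‖ < 1) (L : Submodule ℝ E)
    (hiso : (L : Set E) ⊆ L.omegaOrthogonal J T) (hperp : (Lᗮ : Set E) = J '' L) :
    L.omegaOrthogonal J T = L := by
  have hJinj : Function.Injective J := fun x y hxy => by
    simpa [hJJ] using congrArg J hxy
  have : CompleteSpace L :=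
    (L.isClosed_of_orthogonal_eq_image J hJinj hperp).completeSpace_coe
  refine Set.Subset.antisymm (fun ξ hξ => ?_) hiso
  obtain ⟨a, ha, b, hb, rfl⟩ := L.exists_add_mem_mem_orthogonal ξ
  obtain ⟨x, hx, rfl⟩ : b ∈ J '' L := hperp ▸ hb
  have hJb : J (J x) ∈ L := by
    rw [hJJ]
    exact L.neg_mem hx
  have hω : ⟪J (J x) + T (J x), J (J x)⟫ = 0 := by
    have h := hξ _ hJb
    rwa [map_add, map_add, add_add_add_comm, inner_add_left, hiso ha _ hJb, zero_add] at h
  have hcoer := sub_opNorm_mul_sq_le_inner_add_apply J T hJ (J x)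
  rw [hω] at hcoer
  have hb0 : J x = 0 := by
    simpa using nonpos_of_mul_nonpos_right hcoer (by linarith)
  rw [hb0, add_zero]
  exact ha

end RealHilbert

lemma rIn_eq_real_inner (u w : H0) : rIn u w = ⟪u, w⟫ := by
  rw [rIn, lp.inner_eq_tsum, lp.inner_eq_tsum (𝕜 := ℝ),
    Complex.re_tsum (lp.summable_inner u w)]
  exact tsum_congr fun i => rfl

theorem lagrangian_subspace_general (Υ : H0 →L[ℝ] H0) (hnorm : ‖Υ‖ < 1)
    (L : Submodule ℝ H0)
    -- `ω` vanishes on `L`, i.e. `L ⊆ L^{⊥ω}`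
    (hiso : ∀ ξ ∈ L, ∀ η ∈ L, rIn (Complex.I • ξ + Υ ξ) η = 0)
    -- `iL = L^⊥` for the real scalar product
    (hperp : {w : H0 | ∀ x ∈ L, rIn x w = 0} = {w : H0 | ∃ x ∈ L, w = Complex.I • x}) :
    {ξ : H0 | ∀ η ∈ L, rIn (Complex.I • ξ + Υ ξ) η = 0} = (↑L : Set H0) := by
  let J : H0 →L[ℝ] H0 := ContinuousLinearMap.lsmul ℝ ℂ Complex.I
  have hperp' : (Lᗮ : Set H0) = J '' L := by
    ext w
    rw [SetLike.mem_coe, Submodule.mem_orthogonal, Set.mem_image]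
    simp only [← rIn_eq_real_inner, J, ContinuousLinearMap.lsmul_apply, eq_comm (b := w)]
    exact Set.ext_iff.mp hperp w
  simp only [rIn_eq_real_inner] at hiso ⊢
  exact L.omegaOrthogonal_eq_self J Υ (fun x => by simp [J, smul_smul])
    (fun x => by simp [J, norm_smul]) hnorm hiso hperp'

/-- Let `ω(ξ,η) = ⟨Jξ, η⟩` with `J = i + Υ`, `Υ` bounded antisymmetric with
`‖Υ‖ < 1`.  If `ω` vanishes on a real subspace `L` with `L ⊆ L^{⊥ω}` and `iL = L^⊥`, then
`L^{⊥ω} = L`, i.e. `L` is Lagrangian for `ω`. -/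
theorem lagrangian_subspace (Υ : H0 →L[ℝ] H0) (hnorm : ‖Υ‖ < 1)
    (hanti : ∀ ξ η : H0, rIn (Υ ξ) η = -rIn (Υ η) ξ)
    (L : Submodule ℝ H0)
    -- `ω` vanishes on `L`, i.e. `L ⊆ L^{⊥ω}`
    (hiso : ∀ ξ ∈ L, ∀ η ∈ L, rIn (Complex.I • ξ + Υ ξ) η = 0)
    -- `iL = L^⊥` for the real scalar product
    (hperp : {w : H0 | ∀ x ∈ L, rIn x w = 0} = {w : H0 | ∃ x ∈ L, w = Complex.I • x}) :
    {ξ : H0 | ∀ η ∈ L, rIn (Complex.I • ξ + Υ ξ) η = 0} = (↑L : Set H0) :=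
  lagrangian_subspace_general Υ hnorm L hiso hperp
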